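/- For every positive integer n, the degree d_1(1) of vertex 1 in the single community graph G_1 satisfies P{d_1(1) = 0} = 1 − κ_n/n and P{d_1(1) = 1} = τ_n/n. In particular κ_n ≥ τ_n. -/

import Mathlib

open MeasureTheory Filter

noncomputable section

namespace SuperpositionKConn

/-- `h(x,q) = 1 - (1-q)^((x-1)_+)` (with `0^0 = 1`); here `x - 1` is truncated
natural subtraction, which realizes `(x-1)_+`. -/
def hfun (x : ℕ) (q : ℝ) : ℝ := 1 - (1 - q) ^ (x - 1)

/-- The falling factorial `(x)_2 = x(x-1)` as a real number. -/
def fall2 (x : ℕ) : ℝ := (x : ℝ) * ((x : ℝ) - 1)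

/-- `κ* = E[X h(X,Q)]`, where `μ` is the joint law of `(X,Q)`. -/
def kappaStar (μ : Measure (ℕ × ℝ)) : ℝ := ∫ p, (p.1 : ℝ) * hfun p.1 p.2 ∂μ

/-- `κ_n = E[X̃ h(X̃,Q)]`, where `X̃ = min(X,n)`. -/
def kappaN (μ : Measure (ℕ × ℝ)) (n : ℕ) : ℝ :=
  ∫ p, (min p.1 n : ℝ) * hfun (min p.1 n) p.2 ∂μ

/-- `τ* = E[(X)_2 Q (1-Q)^(X-2)]`. -/
def tauStar (μ : Measure (ℕ × ℝ)) : ℝ :=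
  ∫ p, fall2 p.1 * p.2 * (1 - p.2) ^ (p.1 - 2) ∂μ

/-- `τ_n = E[(X̃)_2 Q (1-Q)^(X̃-2)]`, where `X̃ = min(X,n)`. -/
def tauN (μ : Measure (ℕ × ℝ)) (n : ℕ) : ℝ :=
  ∫ p, fall2 (min p.1 n) * p.2 * (1 - p.2) ^ (min p.1 n - 2) ∂μ

/-- `α = E[Q · 1_{X ≥ 2}]`. -/
def alphaPar (μ : Measure (ℕ × ℝ)) : ℝ := ∫ p in {p : ℕ × ℝ | 2 ≤ p.1}, p.2 ∂μ

/-- `λ*_{n,m,k} = ln n + (k-1) ln(m/n) - (m/n) κ*`. -/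
def lamStar (μ : Measure (ℕ × ℝ)) (n m k : ℕ) : ℝ :=
  Real.log n + ((k : ℝ) - 1) * Real.log ((m : ℝ) / n) - ((m : ℝ) / n) * kappaStar μ

/-- `λ_{n,m,k} = ln n + (k-1) ln(m/n) - (m/n) κ_n`. -/
def lamN (μ : Measure (ℕ × ℝ)) (n m k : ℕ) : ℝ :=
  Real.log n + ((k : ℝ) - 1) * Real.log ((m : ℝ) / n) - ((m : ℝ) / n) * kappaN μ n

/-- `m = Θ(n ln n)`:  `m n / (n ln n)` is eventually bounded between two positive constants. -/
def IsThetaNLogN (m : ℕ → ℕ) : Prop :=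
  ∃ c₁ c₂ : ℝ, 0 < c₁ ∧ 0 < c₂ ∧ ∀ᶠ n : ℕ in atTop,
    c₁ * ((n : ℝ) * Real.log n) ≤ (m n : ℝ) ∧ (m n : ℝ) ≤ c₂ * ((n : ℝ) * Real.log n)

instance (n : ℕ) : MeasurableSpace (Equiv.Perm (Fin n)) := ⊤

/-- The uniform distribution on `[0,1]`. -/
def unif01 : Measure ℝ := volume.restrict (Set.Icc 0 1)

instance : IsProbabilityMeasure unif01 := ⟨by simp [unif01, Real.volume_Icc]⟩

/-- The uniform distribution on permutations of `Fin n`. -/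
def permMeasure (n : ℕ) : Measure (Equiv.Perm (Fin n)) :=
  (@PMF.uniformOfFintype (Equiv.Perm (Fin n)) _ ⟨1⟩).toMeasure

instance (n : ℕ) : IsProbabilityMeasure (permMeasure n) := by
  unfold permMeasure; infer_instance

/-- Sample space describing one community graph on the vertex set `Fin n`:
a sampled pair `(X,Q)`, a uniform random permutation used to pick the vertex set
(the community's vertex set is the image under the permutation of the first
`min X n` indices, hence a uniformly distributed subset of size `min X n`),
and i.i.d. uniform `[0,1]` labels on potential edges (an edge is present iff its
label is `≤ Q`). -/
abbrev CommSpace (n : ℕ) : Type :=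
  (ℕ × ℝ) × Equiv.Perm (Fin n) × (Sym2 (Fin n) → ℝ)

/-- The law of one community. -/
def commMeasure (μ : Measure (ℕ × ℝ)) (n : ℕ) : Measure (CommSpace n) :=
  μ.prod ((permMeasure n).prod (Measure.pi fun _ : Sym2 (Fin n) => unif01))

instance (μ : Measure (ℕ × ℝ)) [IsProbabilityMeasure μ] (n : ℕ) :
    IsProbabilityMeasure (commMeasure μ n) := by
  unfold commMeasure; infer_instance

/-- Vertex `v` belongs to the community's vertex set. -/
def inComm {n : ℕ} (ω : CommSpace n) (v : Fin n) : Prop :=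
  ((ω.2.1.symm v : Fin n) : ℕ) < min ω.1.1 n

/-- `u` and `v` are adjacent in the community graph. -/
def commAdj {n : ℕ} (ω : CommSpace n) (u v : Fin n) : Prop :=
  u ≠ v ∧ inComm ω u ∧ inComm ω v ∧ ω.2.2 s(u, v) ≤ ω.1.2

/-- The degree of `v` in the community graph (`0` if `v` is outside the community). -/
def commDeg {n : ℕ} (ω : CommSpace n) (v : Fin n) : ℕ :=
  Set.ncard {u | commAdj ω v u}

/-- Sample space for `m` independent communities on `Fin n`. -/
abbrev Sample (n m : ℕ) : Type := Fin m → CommSpace n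

/-- The joint law of the `m` i.i.d. communities. -/
def sampleMeasure (μ : Measure (ℕ × ℝ)) (n m : ℕ) : Measure (Sample n m) :=
  Measure.pi fun _ : Fin m => commMeasure μ n

instance (μ : Measure (ℕ × ℝ)) [IsProbabilityMeasure μ] (n m : ℕ) :
    IsProbabilityMeasure (sampleMeasure μ n m) := by
  unfold sampleMeasure; infer_instance

/-- The union graph `G_{[n,m]}`. -/
def unionGraph {n m : ℕ} (ω : Sample n m) : SimpleGraph (Fin n) where
  Adj u v := ∃ i, commAdj (ω i) u v
  symm := by
    constructor
    intro u v h
    simp only [commAdj] at h ⊢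
    obtain ⟨i, hne, hu, hv, he⟩ := h
    exact ⟨i, hne.symm, hv, hu, by rwa [Sym2.eq_swap] at he⟩
  loopless := by
    constructor
    intro v h
    simp only [commAdj] at h
    obtain ⟨i, hne, -⟩ := h
    exact hne rfl

/-- The degree of `v` in the union graph `G_{[n,m]}`. -/
def deg {n m : ℕ} (ω : Sample n m) (v : Fin n) : ℕ :=
  Set.ncard {u | (unionGraph ω).Adj v u}

/-- `N_t`: the number of vertices of degree `t` in `G_{[n,m]}`. -/
def Ndeg {n m : ℕ} (ω : Sample n m) (t : ℕ) : ℕ :=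
  Set.ncard {v | deg ω v = t}

/-- `S(v) = Σ_{i=1}^m d_i(v)`. -/
def Sdeg {n m : ℕ} (ω : Sample n m) (v : Fin n) : ℕ :=
  ∑ i, commDeg (ω i) v

/-- The event `D(v) = {S(v) = k-1 and d_i(v) ∈ {0,1} for all i}`. -/
def Devent {n m : ℕ} (k : ℕ) (ω : Sample n m) (v : Fin n) : Prop :=
  Sdeg ω v = k - 1 ∧ ∀ i, commDeg (ω i) v ≤ 1

/-- `N'_{k-1}`: the number of vertices with property `D`. -/
def Nprime {n m : ℕ} (k : ℕ) (ω : Sample n m) : ℕ :=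
  Set.ncard {v | Devent k ω v}

/-- A graph is vertex `k`-connected if the removal of any `k-1` vertices does not
disconnect it. -/
def VertexKConnected {V : Type*} [Fintype V] [DecidableEq V] (G : SimpleGraph V) (k : ℕ) : Prop :=
  ∀ S : Finset V, S.card ≤ k - 1 → (G.induce (↑(Sᶜ) : Set V)).Connected

/-- A graph is edge `k`-connected if the removal of any `k-1` edges does not
disconnect it. -/
def EdgeKConnected {V : Type*} (G : SimpleGraph V) (k : ℕ) : Prop :=
  ∀ E : Finset (Sym2 V), E.card ≤ k - 1 → (G.deleteEdges ↑E).Connected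

end SuperpositionKConn

namespace SuperpositionKConn

open scoped ENNReal

instance (n : ℕ) : DiscreteMeasurableSpace (Equiv.Perm (Fin n)) :=
  ⟨fun _ => MeasurableSpace.measurableSet_top⟩

open scoped Classical in
-- degree as a Finset card
lemma commDeg_eq_card {n : ℕ} (ω : CommSpace n) (v : Fin n) :
    commDeg ω v = (Finset.univ.filter (fun u => commAdj ω v u)).card := by
  classical
  rw [commDeg, ← Set.ncard_coe_finset]
  congr 1
  ext u
  simp

open scoped Classical in
-- measurability of commDeg
lemma measurable_commDeg {n : ℕ} (v : Fin n) :
    Measurable (fun ω : CommSpace n => commDeg ω v) := by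
  classical
  have hAdj : ∀ u : Fin n, MeasurableSet {ω : CommSpace n | commAdj ω v u} := by
    intro u
    have hIn : ∀ w : Fin n, MeasurableSet {ω : CommSpace n | inComm ω w} := by
      intro w
      have h1 : Measurable (fun ω : CommSpace n => ((ω.2.1.symm w : Fin n) : ℕ)) :=
        (Measurable.of_discrete (f := fun π : Equiv.Perm (Fin n) => ((π.symm w : Fin n) : ℕ))).comp
          (measurable_fst.comp measurable_snd)
      have h2 : Measurable (fun ω : CommSpace n => min ω.1.1 n) :=
        (Measurable.of_discrete (f := fun x : ℕ => min x n)).comp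
          (measurable_fst.comp measurable_fst)
      exact measurableSet_lt h1 h2
    have hE : MeasurableSet {ω : CommSpace n | ω.2.2 s(v, u) ≤ ω.1.2} := by
      refine measurableSet_le ?_ ?_
      · exact (measurable_pi_apply _).comp (measurable_snd.comp measurable_snd)
      · exact measurable_snd.comp measurable_fst
    have : {ω : CommSpace n | commAdj ω v u}
        = {ω : CommSpace n | v ≠ u} ∩ ({ω | inComm ω v} ∩ ({ω | inComm ω u}
          ∩ {ω : CommSpace n | ω.2.2 s(v, u) ≤ ω.1.2})) := by
      ext ω; simp [commAdj, Set.mem_setOf_eq, and_assoc]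
    rw [this]
    refine MeasurableSet.inter ?_ ((hIn v).inter ((hIn u).inter hE))
    by_cases h : v = u
    · simp [h]
    · simp [h]
  have : (fun ω : CommSpace n => commDeg ω v)
      = fun ω => ∑ u : Fin n, if commAdj ω v u then 1 else 0 := by
    funext ω
    rw [commDeg_eq_card, Finset.card_filter]
  rw [this]
  exact Finset.measurable_sum _ fun u _ =>
    Measurable.ite (hAdj u) measurable_const measurable_const


lemma card_perm_lt (m c : ℕ) (hc : c ≤ m + 1) :
    Fintype.card {σ : Equiv.Perm (Fin (m+1)) // ((σ 0 : Fin (m+1)) : ℕ) < c}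
      = c * Nat.factorial m := by
  have e1 : {σ : Equiv.Perm (Fin (m+1)) // ((σ 0 : Fin (m+1)) : ℕ) < c}
      ≃ {x : Fin (m+1) × Equiv.Perm (Fin m) // (x.1 : ℕ) < c} := by
    refine Equiv.Perm.decomposeFin.subtypeEquiv (fun σ => ?_)
    have : (Equiv.Perm.decomposeFin σ).1 = σ 0 := by
      conv_rhs => rw [← Equiv.Perm.decomposeFin.symm_apply_apply σ]
      rw [show Equiv.Perm.decomposeFin.symm (Equiv.Perm.decomposeFin σ)
        = Equiv.Perm.decomposeFin.symm ((Equiv.Perm.decomposeFin σ).1,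
          (Equiv.Perm.decomposeFin σ).2) from rfl]
      rw [Equiv.Perm.decomposeFin_symm_apply_zero]
    rw [this]
  have e2 : {x : Fin (m+1) × Equiv.Perm (Fin m) // (x.1 : ℕ) < c}
      ≃ {a : Fin (m+1) // (a : ℕ) < c} × Equiv.Perm (Fin m) :=
    Equiv.prodSubtypeFstEquivSubtypeProd (p := fun a : Fin (m+1) => (a : ℕ) < c)
  have e3 : {a : Fin (m+1) // (a : ℕ) < c} ≃ Fin c :=
    { toFun := fun a => ⟨(a : Fin (m+1)) , a.2⟩
      invFun := fun b => ⟨⟨b, lt_of_lt_of_le b.2 hc⟩, b.2⟩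
      left_inv := fun a => by ext; rfl
      right_inv := fun b => rfl }
  rw [Fintype.card_congr (e1.trans (e2.trans (e3.prodCongr (Equiv.refl _))))]
  simp [Fintype.card_perm]

lemma permMeasure_lt (n : ℕ) (c : ℕ) (hn : 0 < n) (hc : c ≤ n) :
    permMeasure n {π | ((π.symm ⟨0, hn⟩ : Fin n) : ℕ) < c} = (c : ℝ≥0∞) / n := by
  obtain ⟨m, rfl⟩ := Nat.exists_eq_succ_of_ne_zero hn.ne'
  rw [permMeasure, PMF.toMeasure_uniformOfFintype_apply _ (by trivial)]
  have hcard : Nat.card ↑{π : Equiv.Perm (Fin (m+1)) | ((π.symm ⟨0, hn⟩ : Fin (m+1)) : ℕ) < c}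
      = c * Nat.factorial m := by
    rw [← card_perm_lt m c hc, ← Nat.card_eq_fintype_card]
    refine Nat.card_congr ⟨fun π => ⟨π.1.symm, π.2⟩, fun σ => ⟨σ.1.symm, by
      simpa using σ.2⟩, fun π => Subtype.ext (Equiv.symm_symm _), fun σ => by simp⟩
  rw [Fintype.card_eq_nat_card, hcard, Fintype.card_perm]
  have : Fintype.card (Fin (m+1)) = m + 1 := by simp
  rw [this, Nat.factorial_succ]
  rw [Nat.cast_mul, Nat.cast_mul]
  rw [ENNReal.mul_div_mul_right _ _ (by exact_mod_cast (Nat.factorial_pos m).ne')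
    (by simp)]


lemma unif01_le {q : ℝ} (h0 : 0 ≤ q) (h1 : q ≤ 1) :
    unif01 {t | t ≤ q} = ENNReal.ofReal q := by
  rw [show {t : ℝ | t ≤ q} = Set.Iic q from rfl, unif01,
    Measure.restrict_apply measurableSet_Iic]
  have : Set.Iic q ∩ Set.Icc 0 1 = Set.Icc 0 q := by
    ext t; simp only [Set.mem_inter_iff, Set.mem_Iic, Set.mem_Icc]
    constructor
    · rintro ⟨h, h2, h3⟩; exact ⟨h2, h⟩
    · rintro ⟨h2, h⟩; exact ⟨h, h2, h.trans h1⟩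
  rw [this, Real.volume_Icc, sub_zero]

lemma unif01_gt {q : ℝ} (h0 : 0 ≤ q) (h1 : q ≤ 1) :
    unif01 {t | ¬ t ≤ q} = ENNReal.ofReal (1 - q) := by
  rw [unif01, show {t : ℝ | ¬ t ≤ q} = Set.Ioi q from by ext t; simp [Set.mem_Ioi],
    Measure.restrict_apply measurableSet_Ioi]
  have : Set.Ioi q ∩ Set.Icc 0 1 = Set.Ioc q 1 := by
    ext t; simp only [Set.mem_inter_iff, Set.mem_Ioi, Set.mem_Icc, Set.mem_Ioc]
    constructor
    · rintro ⟨h, h2, h3⟩; exact ⟨h, h3⟩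
    · rintro ⟨h, h3⟩; exact ⟨h, h0.trans h.le, h3⟩
  rw [this, Real.volume_Ioc]

variable {ι : Type*} [Fintype ι]

lemma pi_binom_zero (T : Finset ι) {q : ℝ} (h0 : 0 ≤ q) (h1 : q ≤ 1) :
    Measure.pi (fun _ : ι => unif01) {f : ι → ℝ | ∀ i ∈ T, ¬ f i ≤ q}
      = ENNReal.ofReal ((1 - q) ^ T.card) := by
  classical
  have hset : {f : ι → ℝ | ∀ i ∈ T, ¬ f i ≤ q}
      = Set.univ.pi (fun i => if i ∈ T then {t : ℝ | ¬ t ≤ q} else Set.univ) := by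
    ext f; simp only [Set.mem_setOf_eq, Set.mem_pi, Set.mem_univ, forall_true_left]
    constructor
    · intro h i; split_ifs with hi; exacts [h i hi, trivial]
    · intro h i hi; have := h i; rwa [if_pos hi] at this
  rw [hset, Measure.pi_pi]
  have : ∀ i, unif01 (if i ∈ T then {t : ℝ | ¬ t ≤ q} else Set.univ)
      = if i ∈ T then ENNReal.ofReal (1 - q) else 1 := by
    intro i; split_ifs with hi
    · exact unif01_gt h0 h1
    · simp
  simp_rw [this]
  rw [Finset.prod_ite_mem, Finset.univ_inter, Finset.prod_const,
    ENNReal.ofReal_pow (by linarith)]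

lemma pi_binom_one (T : Finset ι) {q : ℝ} (h0 : 0 ≤ q) (h1 : q ≤ 1) :
    Measure.pi (fun _ : ι => unif01)
      {f : ι → ℝ | (T.filter fun i => f i ≤ q).card = 1}
      = ENNReal.ofReal (T.card * (q * (1 - q) ^ (T.card - 1))) := by
  classical
  have hset : {f : ι → ℝ | (T.filter fun i => f i ≤ q).card = 1}
      = ⋃ i0 ∈ T, Set.univ.pi (fun i =>
          if i = i0 then {t : ℝ | t ≤ q}
          else if i ∈ T then {t : ℝ | ¬ t ≤ q} else Set.univ) := by
    ext f
    simp only [Set.mem_setOf_eq, Finset.card_eq_one, Set.mem_iUnion, Set.mem_pi,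
      Set.mem_univ, forall_true_left]
    constructor
    · rintro ⟨a, ha⟩
      have haT : a ∈ T := by
        have : a ∈ T.filter fun i => f i ≤ q := ha ▸ Finset.mem_singleton_self a
        exact (Finset.mem_filter.mp this).1
      have hfa : f a ≤ q := by
        have : a ∈ T.filter fun i => f i ≤ q := ha ▸ Finset.mem_singleton_self a
        exact (Finset.mem_filter.mp this).2
      refine ⟨a, haT, fun i => ?_⟩
      split_ifs with h1' h2'
      · subst h1'; exact hfa
      · intro hle
        have : i ∈ T.filter fun i => f i ≤ q := Finset.mem_filter.mpr ⟨h2', hle⟩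
        rw [ha, Finset.mem_singleton] at this; exact h1' this
      · trivial
    · rintro ⟨a, haT, h⟩
      refine ⟨a, ?_⟩
      ext i
      simp only [Finset.mem_filter, Finset.mem_singleton]
      constructor
      · rintro ⟨hiT, hle⟩
        by_contra hne
        have h' : f i ∈ (if i = a then {t : ℝ | t ≤ q}
            else if i ∈ T then {t : ℝ | ¬ t ≤ q} else Set.univ) := h i
        rw [if_neg hne, if_pos hiT] at h'
        exact h' hle
      · intro hia
        subst hia
        have h' : f i ∈ (if i = i then {t : ℝ | t ≤ q}
            else if i ∈ T then {t : ℝ | ¬ t ≤ q} else Set.univ) := h i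
        rw [if_pos rfl] at h'
        exact ⟨haT, h'⟩
  rw [hset]
  rw [measure_biUnion_finset ?_ ?_]
  · have hval : ∀ i0 ∈ T, Measure.pi (fun _ : ι => unif01) (Set.univ.pi (fun i =>
        if i = i0 then {t : ℝ | t ≤ q}
        else if i ∈ T then {t : ℝ | ¬ t ≤ q} else Set.univ))
        = ENNReal.ofReal (q * (1 - q) ^ (T.card - 1)) := by
      intro i0 hi0
      rw [Measure.pi_pi]
      have : ∀ i, unif01 (if i = i0 then {t : ℝ | t ≤ q}
          else if i ∈ T then {t : ℝ | ¬ t ≤ q} else Set.univ)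
          = if i = i0 then ENNReal.ofReal q
            else if i ∈ T then ENNReal.ofReal (1 - q) else 1 := by
        intro i; split_ifs with hA hB
        · exact unif01_le h0 h1
        · exact unif01_gt h0 h1
        · simp
      simp_rw [this]
      rw [← Finset.mul_prod_erase Finset.univ _ (Finset.mem_univ i0), if_pos rfl]
      have hprod : ∏ i ∈ Finset.univ.erase i0,
          (if i = i0 then ENNReal.ofReal q
            else if i ∈ T then ENNReal.ofReal (1 - q) else 1)
          = ENNReal.ofReal (1 - q) ^ (T.card - 1) := by
        rw [Finset.prod_congr rfl (fun i hi => by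
          rw [if_neg (Finset.ne_of_mem_erase hi)])]
        rw [Finset.prod_ite_mem, Finset.prod_const]
        congr 1
        rw [Finset.erase_inter, Finset.univ_inter, Finset.card_erase_of_mem hi0]
      rw [hprod, ← ENNReal.ofReal_pow (by linarith), ← ENNReal.ofReal_mul h0]
    rw [Finset.sum_congr rfl hval, Finset.sum_const, nsmul_eq_mul,
      ← ENNReal.ofReal_natCast, ← ENNReal.ofReal_mul (by positivity)]
  · intro i0 hi0 i1 hi1 hne
    simp only [Function.onFun, Set.disjoint_left]
    intro f hf0 hf1
    have h0' : f i1 ∈ (if i1 = i0 then {t : ℝ | t ≤ q}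
        else if i1 ∈ T then {t : ℝ | ¬ t ≤ q} else Set.univ) := hf0 i1 (Set.mem_univ i1)
    have h1' : f i1 ∈ (if i1 = i1 then {t : ℝ | t ≤ q}
        else if i1 ∈ T then {t : ℝ | ¬ t ≤ q} else Set.univ) := hf1 i1 (Set.mem_univ i1)
    rw [if_neg hne.symm, if_pos (Finset.mem_coe.mp hi1)] at h0'
    rw [if_pos rfl] at h1'
    exact h0' h1'
  · intro i0 _
    exact MeasurableSet.univ_pi fun i => by
      split_ifs
      · exact measurableSet_Iic
      · exact (measurableSet_Iic (a := q)).compl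
      · exact MeasurableSet.univ



open scoped Classical in
/-- Degree characterization for fixed parameters. -/
lemma commDeg_formula {n : ℕ} (hn : 0 < n) (x : ℕ) (q : ℝ)
    (π : Equiv.Perm (Fin n)) (f : Sym2 (Fin n) → ℝ) :
    commDeg ((x, q), π, f) (⟨0, hn⟩ : Fin n) =
      if ((π.symm ⟨0, hn⟩ : Fin n) : ℕ) < min x n then
        (((Finset.univ.filter fun u : Fin n => ((π.symm u : Fin n) : ℕ) < min x n).erase
            ⟨0, hn⟩).filter fun u => f s(⟨0, hn⟩, u) ≤ q).card
      else 0 := by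
  set v0 : Fin n := ⟨0, hn⟩
  rw [commDeg_eq_card]
  split_ifs with hin
  · congr 1
    ext u
    simp only [Finset.mem_filter, Finset.mem_erase, Finset.mem_univ, true_and]
    simp only [commAdj, inComm]
    constructor
    · rintro ⟨hne, _, hu, hle⟩
      exact ⟨⟨fun h => hne h.symm, hu⟩, hle⟩
    · rintro ⟨⟨hne, hu⟩, hle⟩
      exact ⟨fun h => hne h.symm, hin, hu, hle⟩
  · rw [Finset.card_eq_zero, Finset.filter_eq_empty_iff]
    intro u _
    rw [commAdj]
    push_neg
    intro _ hv0
    exact absurd hv0 hin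

open scoped Classical in
lemma card_lt_filter_base {n : ℕ} (c : ℕ) (hc : c ≤ n) :
    (Finset.univ.filter fun w : Fin n => (w : ℕ) < c).card = c := by
  have : (Finset.univ.filter fun w : Fin n => (w : ℕ) < c).card
      = (Finset.univ : Finset (Fin c)).card := by
    refine Finset.card_bij' (fun w hw => (⟨(w : ℕ), (Finset.mem_filter.mp hw).2⟩ : Fin c))
      (fun b _ => (⟨(b : ℕ), lt_of_lt_of_le b.2 hc⟩ : Fin n)) ?_ ?_ ?_ ?_
    · intro a ha; exact Finset.mem_univ _
    · intro b hb
      simp [b.2]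
    · intro a ha; rfl
    · intro b hb; rfl
  rw [this, Finset.card_univ, Fintype.card_fin]

open scoped Classical in
lemma card_lt_filter {n : ℕ} (π : Equiv.Perm (Fin n)) (c : ℕ) (hc : c ≤ n) :
    (Finset.univ.filter fun u : Fin n => ((π.symm u : Fin n) : ℕ) < c).card = c := by
  have : (Finset.univ.filter fun u : Fin n => ((π.symm u : Fin n) : ℕ) < c).card
      = (Finset.univ.filter fun w : Fin n => (w : ℕ) < c).card := by
    refine Finset.card_bij' (fun u _ => π.symm u) (fun w _ => π w) ?_ ?_ ?_ ?_
    · intro a ha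
      simp only [Finset.mem_filter, Finset.mem_univ, true_and] at ha ⊢
      exact ha
    · intro w hw
      simp only [Finset.mem_filter, Finset.mem_univ, true_and] at hw ⊢
      simpa using hw
    · intro a _; simp
    · intro w _; simp
  rw [this, card_lt_filter_base c hc]


open scoped Classical in
lemma lintegral_ite_perm {n : ℕ} (A : Set (Equiv.Perm (Fin n)))
    [DecidablePred (· ∈ A)] (a b : ℝ≥0∞) :
    ∫⁻ π, (if π ∈ A then a else b) ∂(permMeasure n)
      = a * (permMeasure n) A + b * (permMeasure n) Aᶜ := by
  have hA : MeasurableSet A := MeasurableSpace.measurableSet_top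
  rw [← lintegral_add_compl _ hA]
  congr 1
  · rw [setLIntegral_congr_fun hA (fun π hπ => if_pos hπ),
      setLIntegral_const]
  · rw [setLIntegral_congr_fun hA.compl (fun π hπ => if_neg hπ),
      setLIntegral_const]

open scoped Classical in
lemma pi_slice {n : ℕ} (hn : 0 < n) (x : ℕ) {q : ℝ} (h0 : 0 ≤ q) (h1 : q ≤ 1)
    (π : Equiv.Perm (Fin n)) (hin : ((π.symm ⟨0, hn⟩ : Fin n) : ℕ) < min x n) (k : ℕ) :
    (Measure.pi fun _ : Sym2 (Fin n) => unif01)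
      {f : Sym2 (Fin n) → ℝ | commDeg ((x, q), π, f) ⟨0, hn⟩ = k}
      = (Measure.pi fun _ : Sym2 (Fin n) => unif01)
        {f : Sym2 (Fin n) → ℝ |
          ((((Finset.univ.filter fun u : Fin n =>
            ((π.symm u : Fin n) : ℕ) < min x n).erase ⟨0, hn⟩).image
              (fun u => s((⟨0, hn⟩ : Fin n), u))).filter fun i => f i ≤ q).card = k} := by
  congr 1
  ext f
  simp only [Set.mem_setOf_eq]
  rw [commDeg_formula hn x q π f, if_pos hin]
  set v0 : Fin n := ⟨0, hn⟩
  set T := (Finset.univ.filter fun u : Fin n =>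
    ((π.symm u : Fin n) : ℕ) < min x n).erase v0 with hT
  have himg : (T.image fun u => s(v0, u)).filter (fun i => f i ≤ q)
      = (T.filter fun u => f s(v0, u) ≤ q).image (fun u => s(v0, u)) :=
    Finset.filter_image
  have hinj : Set.InjOn (fun u => s(v0, u)) ↑(T.filter fun u => f s(v0, u) ≤ q) :=
    fun a _ b _ h => Sym2.congr_right.mp h
  rw [himg, Finset.card_image_of_injOn hinj]

open scoped Classical in
lemma card_T {n : ℕ} (hn : 0 < n) (x : ℕ) (π : Equiv.Perm (Fin n))
    (hin : ((π.symm ⟨0, hn⟩ : Fin n) : ℕ) < min x n) :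
    (((Finset.univ.filter fun u : Fin n =>
        ((π.symm u : Fin n) : ℕ) < min x n).erase ⟨0, hn⟩).image
          (fun u => s((⟨0, hn⟩ : Fin n), u))).card = min x n - 1 := by
  set v0 : Fin n := ⟨0, hn⟩
  set T := (Finset.univ.filter fun u : Fin n =>
    ((π.symm u : Fin n) : ℕ) < min x n).erase v0 with hT
  have h1 : (T.image (fun u => s(v0, u))).card = T.card :=
    Finset.card_image_of_injOn (fun a _ b _ h => Sym2.congr_right.mp h)
  have h2 : T.card = (Finset.univ.filter fun u : Fin n =>
      ((π.symm u : Fin n) : ℕ) < min x n).card - 1 :=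
    Finset.card_erase_of_mem (Finset.mem_filter.mpr ⟨Finset.mem_univ _, hin⟩)
  rw [h1, h2, card_lt_filter π (min x n) (min_le_right _ _)]

open scoped Classical in
lemma slice_zero {n : ℕ} (hn : 0 < n) (x : ℕ) {q : ℝ} (h0 : 0 ≤ q) (h1 : q ≤ 1) :
    ((permMeasure n).prod (Measure.pi fun _ : Sym2 (Fin n) => unif01))
      {y : Equiv.Perm (Fin n) × (Sym2 (Fin n) → ℝ) |
        commDeg ((x, q), y.1, y.2) ⟨0, hn⟩ = 0}
      = ENNReal.ofReal (1 - ((min x n : ℕ) : ℝ) / n * hfun (min x n) q) := by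
  set c := min x n with hcdef
  have hc : c ≤ n := min_le_right _ _
  set v0 : Fin n := ⟨0, hn⟩
  have hmeas : Measurable (fun y : Equiv.Perm (Fin n) × (Sym2 (Fin n) → ℝ) =>
      commDeg ((x, q), y.1, y.2) v0) :=
    (measurable_commDeg v0).comp (measurable_const.prodMk measurable_id)
  have hS : MeasurableSet {y : Equiv.Perm (Fin n) × (Sym2 (Fin n) → ℝ) |
      commDeg ((x, q), y.1, y.2) v0 = 0} := hmeas (measurableSet_singleton 0)
  rw [Measure.prod_apply hS]
  have hslice : ∀ π : Equiv.Perm (Fin n),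
      (Measure.pi fun _ : Sym2 (Fin n) => unif01)
        (Prod.mk π ⁻¹' {y : Equiv.Perm (Fin n) × (Sym2 (Fin n) → ℝ) |
          commDeg ((x, q), y.1, y.2) v0 = 0})
      = if π ∈ {π : Equiv.Perm (Fin n) | ((π.symm v0 : Fin n) : ℕ) < c}
          then ENNReal.ofReal ((1 - q) ^ (c - 1)) else 1 := by
    intro π
    have hpre : Prod.mk π ⁻¹' {y : Equiv.Perm (Fin n) × (Sym2 (Fin n) → ℝ) |
        commDeg ((x, q), y.1, y.2) v0 = 0}
        = {f : Sym2 (Fin n) → ℝ | commDeg ((x, q), π, f) v0 = 0} := rfl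
    rw [hpre]
    split_ifs with hin
    · rw [pi_slice hn x h0 h1 π hin 0]
      have hset : {f : Sym2 (Fin n) → ℝ |
          ((((Finset.univ.filter fun u : Fin n =>
            ((π.symm u : Fin n) : ℕ) < c).erase v0).image
              (fun u => s(v0, u))).filter fun i => f i ≤ q).card = 0}
          = {f : Sym2 (Fin n) → ℝ | ∀ i ∈ ((Finset.univ.filter fun u : Fin n =>
            ((π.symm u : Fin n) : ℕ) < c).erase v0).image (fun u => s(v0, u)),
              ¬ f i ≤ q} := by
        ext f
        simp only [Set.mem_setOf_eq, Finset.card_eq_zero, Finset.filter_eq_empty_iff]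
      rw [hset, pi_binom_zero _ h0 h1, card_T hn x π hin]
    · have : {f : Sym2 (Fin n) → ℝ | commDeg ((x, q), π, f) v0 = 0} = Set.univ := by
        ext f
        simp only [Set.mem_setOf_eq, Set.mem_univ, iff_true]
        rw [commDeg_formula hn x q π f,
          if_neg (show ¬ ((π.symm (⟨0, hn⟩ : Fin n) : Fin n) : ℕ) < min x n from hin)]
      rw [this, measure_univ]
  rw [lintegral_congr hslice, lintegral_ite_perm,
    permMeasure_lt n c hn hc,
    prob_compl_eq_one_sub (MeasurableSpace.measurableSet_top),
    permMeasure_lt n c hn hc]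
  have hdiv : (c : ℝ≥0∞) / (n : ℝ≥0∞) = ENNReal.ofReal ((c : ℝ) / n) := by
    rw [ENNReal.ofReal_div_of_pos (by exact_mod_cast hn), ENNReal.ofReal_natCast,
      ENNReal.ofReal_natCast]
  rw [hdiv, one_mul]
  rw [show (1 : ℝ≥0∞) - ENNReal.ofReal ((c : ℝ) / n) = ENNReal.ofReal (1 - (c : ℝ) / n)
    from by rw [ENNReal.ofReal_sub _ (by positivity), ENNReal.ofReal_one]]
  rw [← ENNReal.ofReal_mul (pow_nonneg (by linarith) _),
    ← ENNReal.ofReal_add (mul_nonneg (pow_nonneg (by linarith) _) (by positivity)) (by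
      have : (c : ℝ) / n ≤ 1 := by
        rw [div_le_one (by exact_mod_cast hn)]
        exact_mod_cast hc
      linarith)]
  congr 1
  rw [hfun]
  ring

open scoped Classical in
lemma slice_one {n : ℕ} (hn : 0 < n) (x : ℕ) {q : ℝ} (h0 : 0 ≤ q) (h1 : q ≤ 1) :
    ((permMeasure n).prod (Measure.pi fun _ : Sym2 (Fin n) => unif01))
      {y : Equiv.Perm (Fin n) × (Sym2 (Fin n) → ℝ) |
        commDeg ((x, q), y.1, y.2) ⟨0, hn⟩ = 1}
      = ENNReal.ofReal (fall2 (min x n) * q * (1 - q) ^ (min x n - 2) / n) := by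
  set c := min x n with hcdef
  have hc : c ≤ n := min_le_right _ _
  set v0 : Fin n := ⟨0, hn⟩
  have hmeas : Measurable (fun y : Equiv.Perm (Fin n) × (Sym2 (Fin n) → ℝ) =>
      commDeg ((x, q), y.1, y.2) v0) :=
    (measurable_commDeg v0).comp (measurable_const.prodMk measurable_id)
  have hS : MeasurableSet {y : Equiv.Perm (Fin n) × (Sym2 (Fin n) → ℝ) |
      commDeg ((x, q), y.1, y.2) v0 = 1} := hmeas (measurableSet_singleton 1)
  rw [Measure.prod_apply hS]
  have hslice : ∀ π : Equiv.Perm (Fin n),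
      (Measure.pi fun _ : Sym2 (Fin n) => unif01)
        (Prod.mk π ⁻¹' {y : Equiv.Perm (Fin n) × (Sym2 (Fin n) → ℝ) |
          commDeg ((x, q), y.1, y.2) v0 = 1})
      = if π ∈ {π : Equiv.Perm (Fin n) | ((π.symm v0 : Fin n) : ℕ) < c}
          then ENNReal.ofReal (((c : ℝ) - 1) * (q * (1 - q) ^ (c - 2))) else 0 := by
    intro π
    have hpre : Prod.mk π ⁻¹' {y : Equiv.Perm (Fin n) × (Sym2 (Fin n) → ℝ) |
        commDeg ((x, q), y.1, y.2) v0 = 1}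
        = {f : Sym2 (Fin n) → ℝ | commDeg ((x, q), π, f) v0 = 1} := rfl
    rw [hpre]
    split_ifs with hin
    · rw [pi_slice hn x h0 h1 π hin 1, pi_binom_one _ h0 h1, card_T hn x π hin]
      have hin' : ((π.symm (⟨0, hn⟩ : Fin n) : Fin n) : ℕ) < c := hin
      have hc1 : 1 ≤ c := by omega
      have hcast : ((c - 1 : ℕ) : ℝ) = (c : ℝ) - 1 := by
        rw [Nat.cast_sub hc1, Nat.cast_one]
      rw [hcast, Nat.sub_sub]
    · have : {f : Sym2 (Fin n) → ℝ | commDeg ((x, q), π, f) v0 = 1} = ∅ := by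
        ext f
        simp only [Set.mem_setOf_eq, Set.mem_empty_iff_false, iff_false]
        rw [commDeg_formula hn x q π f,
          if_neg (show ¬ ((π.symm (⟨0, hn⟩ : Fin n) : Fin n) : ℕ) < min x n from hin)]
        omega
      rw [this, measure_empty]
  rw [lintegral_congr hslice, lintegral_ite_perm, permMeasure_lt n c hn hc,
    zero_mul, add_zero]
  have hdiv : (c : ℝ≥0∞) / (n : ℝ≥0∞) = ENNReal.ofReal ((c : ℝ) / n) := by
    rw [ENNReal.ofReal_div_of_pos (by exact_mod_cast hn), ENNReal.ofReal_natCast,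
      ENNReal.ofReal_natCast]
  rw [hdiv, ← ENNReal.ofReal_mul' (by positivity)]
  congr 1
  rw [fall2]
  ring


lemma measurable_w0 (n : ℕ) :
    Measurable (fun p : ℕ × ℝ => (min p.1 n : ℝ) * hfun (min p.1 n) p.2) := by
  have : (fun p : ℕ × ℝ => (min p.1 n : ℝ) * hfun (min p.1 n) p.2)
      = (fun p : ℝ × ℕ => (min p.2 n : ℝ) * hfun (min p.2 n) p.1) ∘ Prod.swap := rfl
  rw [this]
  refine Measurable.comp ?_ measurable_swap
  refine measurable_from_prod_countable_left fun x => ?_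
  show Measurable fun q : ℝ => (min (x : ℝ) (n : ℝ)) * hfun (min x n) q
  unfold hfun
  exact measurable_const.mul
    (measurable_const.sub ((measurable_const.sub measurable_id).pow_const _))

lemma measurable_w1 (n : ℕ) :
    Measurable (fun p : ℕ × ℝ =>
      fall2 (min p.1 n) * p.2 * (1 - p.2) ^ (min p.1 n - 2)) := by
  have : (fun p : ℕ × ℝ => fall2 (min p.1 n) * p.2 * (1 - p.2) ^ (min p.1 n - 2))
      = (fun p : ℝ × ℕ => fall2 (min p.2 n) * p.1 * (1 - p.1) ^ (min p.2 n - 2))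
        ∘ Prod.swap := rfl
  rw [this]
  refine Measurable.comp ?_ measurable_swap
  refine measurable_from_prod_countable_left fun x => ?_
  show Measurable fun q : ℝ => fall2 (min x n) * q * (1 - q) ^ (min x n - 2)
  exact (measurable_const.mul measurable_id).mul
    ((measurable_const.sub measurable_id).pow_const _)

lemma hfun_mem {c : ℕ} {q : ℝ} (h0 : 0 ≤ q) (h1 : q ≤ 1) :
    hfun c q ∈ Set.Icc (0 : ℝ) 1 := by
  have h2 : (0 : ℝ) ≤ (1 - q) ^ (c - 1) := pow_nonneg (by linarith) _
  have h3 : (1 - q) ^ (c - 1) ≤ 1 := pow_le_one₀ (by linarith) (by linarith)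
  exact ⟨by rw [hfun]; linarith, by rw [hfun]; linarith⟩

lemma fall2_nonneg (c : ℕ) : 0 ≤ fall2 c := by
  rcases c with _ | c
  · simp [fall2]
  · rw [fall2]
    have : (1 : ℝ) ≤ ((c + 1 : ℕ) : ℝ) := by exact_mod_cast Nat.one_le_iff_ne_zero.mpr (by omega)
    nlinarith [Nat.cast_nonneg (α := ℝ) (c + 1)]

lemma fall2_le (c n : ℕ) (h : c ≤ n) : fall2 c ≤ (n : ℝ) * n := by
  rw [fall2]
  have h1 : (c : ℝ) ≤ n := by exact_mod_cast h
  have h2 : (c : ℝ) - 1 ≤ n := by linarith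
  have h0 : (0 : ℝ) ≤ c := Nat.cast_nonneg c
  rcases le_or_gt ((c : ℝ) - 1) 0 with hc | hc
  · nlinarith [Nat.cast_nonneg (α := ℝ) n]
  · nlinarith

theorem single_community_degree_probabilities'
    (μ : Measure (ℕ × ℝ)) [IsProbabilityMeasure μ]
    (hQ : ∀ᵐ p ∂μ, p.2 ∈ Set.Icc (0 : ℝ) 1)
    (n : ℕ) (hn : 0 < n) :
    ((μ.prod ((permMeasure n).prod (Measure.pi fun _ : Sym2 (Fin n) => unif01)))
        {ω : CommSpace n | commDeg ω ⟨0, hn⟩ = 0}).toReal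
        = 1 - kappaN μ n / n ∧
    ((μ.prod ((permMeasure n).prod (Measure.pi fun _ : Sym2 (Fin n) => unif01)))
        {ω : CommSpace n | commDeg ω ⟨0, hn⟩ = 1}).toReal
        = tauN μ n / n ∧
    tauN μ n ≤ kappaN μ n := by
  set v0 : Fin n := ⟨0, hn⟩
  set ν := (permMeasure n).prod (Measure.pi fun _ : Sym2 (Fin n) => unif01) with hν
  have hnR : (0 : ℝ) < n := by exact_mod_cast hn
  set w0 : ℕ × ℝ → ℝ := fun p => (min p.1 n : ℝ) * hfun (min p.1 n) p.2 with hw0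
  set w1 : ℕ × ℝ → ℝ := fun p =>
    fall2 (min p.1 n) * p.2 * (1 - p.2) ^ (min p.1 n - 2) with hw1
  have hminle : ∀ p : ℕ × ℝ, (min (p.1 : ℝ) (n : ℝ)) ≤ n := fun p => min_le_right _ _
  have hminnn : ∀ p : ℕ × ℝ, (0 : ℝ) ≤ min (p.1 : ℝ) (n : ℝ) :=
    fun p => le_min (Nat.cast_nonneg _) (Nat.cast_nonneg _)
  -- integrability
  have hint0 : Integrable w0 μ := by
    refine ⟨(measurable_w0 n).aestronglyMeasurable, ?_⟩
    refine HasFiniteIntegral.of_bounded (C := n) ?_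
    filter_upwards [hQ] with p hp
    have hh := hfun_mem (c := min p.1 n) hp.1 hp.2
    rw [Real.norm_eq_abs, hw0, abs_mul, abs_of_nonneg (hminnn p), abs_of_nonneg hh.1]
    calc (min (p.1 : ℝ) (n : ℝ)) * hfun (min p.1 n) p.2
        ≤ (min (p.1 : ℝ) (n : ℝ)) * 1 := mul_le_mul_of_nonneg_left hh.2 (hminnn p)
      _ ≤ n := by rw [mul_one]; exact hminle p
  have hint1 : Integrable w1 μ := by
    refine ⟨(measurable_w1 n).aestronglyMeasurable, ?_⟩
    refine HasFiniteIntegral.of_bounded (C := (n : ℝ) * n) ?_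
    filter_upwards [hQ] with p hp
    have hpow0 : (0 : ℝ) ≤ (1 - p.2) ^ (min p.1 n - 2) := pow_nonneg (by linarith [hp.2]) _
    have hpow1 : (1 - p.2) ^ (min p.1 n - 2) ≤ 1 :=
      pow_le_one₀ (by linarith [hp.2]) (by linarith [hp.1])
    have habs : |p.2| ≤ 1 := abs_le.mpr ⟨by linarith [hp.1], hp.2⟩
    have hf0 := fall2_nonneg (min p.1 n)
    rw [Real.norm_eq_abs, hw1, abs_mul, abs_mul, abs_of_nonneg hf0,
      abs_of_nonneg hp.1, abs_of_nonneg hpow0]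
    have s1 : fall2 (min p.1 n) * p.2 ≤ fall2 (min p.1 n) :=
      by nlinarith [hp.1, hp.2]
    have s2 : fall2 (min p.1 n) * p.2 * (1 - p.2) ^ (min p.1 n - 2)
        ≤ fall2 (min p.1 n) := by
      nlinarith [mul_nonneg hf0 hp.1]
    exact s2.trans (fall2_le _ n (min_le_right _ _))
  -- nonnegativity a.e.
  have hg0nonneg : 0 ≤ᵐ[μ] fun p => 1 - w0 p / n := by
    filter_upwards [hQ] with p hp
    have hh := hfun_mem (c := min p.1 n) hp.1 hp.2
    have hle : w0 p ≤ n := by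
      rw [hw0]
      calc (min (p.1 : ℝ) (n : ℝ)) * hfun (min p.1 n) p.2
          ≤ (min (p.1 : ℝ) (n : ℝ)) * 1 := mul_le_mul_of_nonneg_left hh.2 (hminnn p)
        _ ≤ n := by rw [mul_one]; exact hminle p
    simp only [Pi.zero_apply, sub_nonneg]
    rw [div_le_one hnR]
    exact hle
  have hg1nonneg : 0 ≤ᵐ[μ] fun p => w1 p / n := by
    filter_upwards [hQ] with p hp
    have hpow0 : (0 : ℝ) ≤ (1 - p.2) ^ (min p.1 n - 2) := pow_nonneg (by linarith [hp.2]) _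
    have hf0 := fall2_nonneg (min p.1 n)
    simp only [Pi.zero_apply, hw1]
    exact div_nonneg (mul_nonneg (mul_nonneg hf0 hp.1) hpow0) (Nat.cast_nonneg n)
  -- measurable sets
  have hA0 : MeasurableSet {ω : CommSpace n | commDeg ω v0 = 0} :=
    (measurable_commDeg v0) (measurableSet_singleton 0)
  have hA1 : MeasurableSet {ω : CommSpace n | commDeg ω v0 = 1} :=
    (measurable_commDeg v0) (measurableSet_singleton 1)
  -- first identity
  have key0 : ((μ.prod ν) {ω : CommSpace n | commDeg ω v0 = 0}).toReal
      = 1 - kappaN μ n / n := by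
    rw [Measure.prod_apply hA0]
    have hcong : ∫⁻ p, ν (Prod.mk p ⁻¹' {ω : CommSpace n | commDeg ω v0 = 0}) ∂μ
        = ∫⁻ p, ENNReal.ofReal (1 - w0 p / n) ∂μ := by
      refine lintegral_congr_ae ?_
      filter_upwards [hQ] with p hp
      have hpre : Prod.mk p ⁻¹' {ω : CommSpace n | commDeg ω v0 = 0}
          = {y : Equiv.Perm (Fin n) × (Sym2 (Fin n) → ℝ) |
              commDeg ((p.1, p.2), y.1, y.2) v0 = 0} := rfl
      rw [hpre, hν, slice_zero hn p.1 hp.1 hp.2]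
      congr 1
      rw [hw0]
      push_cast
      ring
    rw [hcong, ← integral_eq_lintegral_of_nonneg_ae hg0nonneg
      (measurable_const.sub ((measurable_w0 n).div_const n)).aestronglyMeasurable]
    rw [integral_sub (integrable_const 1) (hint0.div_const n),
      integral_const, integral_div, probReal_univ]
    have hkap : ∫ p, w0 p ∂μ = kappaN μ n := rfl
    rw [hkap]
    simp
  -- second identity
  have key1 : ((μ.prod ν) {ω : CommSpace n | commDeg ω v0 = 1}).toReal
      = tauN μ n / n := by
    rw [Measure.prod_apply hA1]
    have hcong : ∫⁻ p, ν (Prod.mk p ⁻¹' {ω : CommSpace n | commDeg ω v0 = 1}) ∂μ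
        = ∫⁻ p, ENNReal.ofReal (w1 p / n) ∂μ := by
      refine lintegral_congr_ae ?_
      filter_upwards [hQ] with p hp
      have hpre : Prod.mk p ⁻¹' {ω : CommSpace n | commDeg ω v0 = 1}
          = {y : Equiv.Perm (Fin n) × (Sym2 (Fin n) → ℝ) |
              commDeg ((p.1, p.2), y.1, y.2) v0 = 1} := rfl
      rw [hpre, hν, slice_one hn p.1 hp.1 hp.2]
    rw [hcong, ← integral_eq_lintegral_of_nonneg_ae hg1nonneg
      ((measurable_w1 n).div_const n).aestronglyMeasurable]
    rw [integral_div]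
    have htau : ∫ p, w1 p ∂μ = tauN μ n := rfl
    rw [htau]
  refine ⟨key0, key1, ?_⟩
  -- the inequality
  have hdisj : Disjoint {ω : CommSpace n | commDeg ω v0 = 0}
      {ω : CommSpace n | commDeg ω v0 = 1} := by
    rw [Set.disjoint_left]
    intro ω h0' h1'
    simp only [Set.mem_setOf_eq] at h0' h1'
    omega
  have hunion : (μ.prod ν) ({ω : CommSpace n | commDeg ω v0 = 0}
      ∪ {ω : CommSpace n | commDeg ω v0 = 1})
      = (μ.prod ν) {ω : CommSpace n | commDeg ω v0 = 0}
        + (μ.prod ν) {ω : CommSpace n | commDeg ω v0 = 1} :=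
    measure_union hdisj hA1
  have hle : (μ.prod ν) {ω : CommSpace n | commDeg ω v0 = 0}
      + (μ.prod ν) {ω : CommSpace n | commDeg ω v0 = 1} ≤ 1 := by
    rw [← hunion]; exact prob_le_one
  have hsum : (1 - kappaN μ n / n) + tauN μ n / n ≤ 1 := by
    rw [← key0, ← key1]
    rw [← ENNReal.toReal_add (measure_ne_top _ _) (measure_ne_top _ _)]
    calc ((μ.prod ν) {ω : CommSpace n | commDeg ω v0 = 0}
          + (μ.prod ν) {ω : CommSpace n | commDeg ω v0 = 1}).toReal
        ≤ (1 : ℝ≥0∞).toReal := ENNReal.toReal_mono (by simp) hle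
      _ = 1 := by simp
  have hfin : tauN μ n / n ≤ kappaN μ n / n := by linarith
  exact (div_le_div_iff_of_pos_right hnR).mp hfin


/-- `P{d_1(1) = 0} = 1 - κ_n/n`, `P{d_1(1) = 1} = τ_n/n`,
and consequently `κ_n ≥ τ_n`. -/
theorem single_community_degree_probabilities
    (μ : Measure (ℕ × ℝ)) [IsProbabilityMeasure μ]
    (hQ : ∀ᵐ p ∂μ, p.2 ∈ Set.Icc (0 : ℝ) 1)
    (n : ℕ) (hn : 0 < n) :
    (commMeasure μ n {ω : CommSpace n | commDeg ω ⟨0, hn⟩ = 0}).toReal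
        = 1 - kappaN μ n / n ∧
    (commMeasure μ n {ω : CommSpace n | commDeg ω ⟨0, hn⟩ = 1}).toReal
        = tauN μ n / n ∧
    tauN μ n ≤ kappaN μ n :=
  single_community_degree_probabilities' μ hQ n hn

end SuperpositionKConn
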